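/- If the crucial part equals the whole BGP, completeness holds: for any BGP P, set C of completeness statements, and graph G, if cruc(P, C, G) = P then C, G ⊨ Compl(P). -/

import Mathlib

/-- Constants (IRIs/literals) -/
abbrev Const := ℕ
/-- Variables -/
abbrev Var := ℕ

/-- A term is a constant or a variable. -/
inductive Term where
  | c : Const → Term
  | v : Var → Term
deriving DecidableEq

/-- Triple pattern -/
abbrev TP := Term × Term × Term
/-- Basic graph pattern (also used for graphs, as sets of ground triple patterns) -/
abbrev BGP := Set TP
/-- (Partial) mapping from variables to constants -/
abbrev Mapping := Var → Option Const

def termVars : Term → Set Var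
  | .c _ => ∅
  | .v x => {x}

def tpVars (t : TP) : Set Var := termVars t.1 ∪ termVars t.2.1 ∪ termVars t.2.2

def bgpVars (P : BGP) : Set Var := ⋃ t ∈ P, tpVars t

def termConsts : Term → Set Const
  | .c a => {a}
  | .v _ => ∅

def tpConsts (t : TP) : Set Const := termConsts t.1 ∪ termConsts t.2.1 ∪ termConsts t.2.2

def bgpConsts (P : BGP) : Set Const := ⋃ t ∈ P, tpConsts t

/-- A graph is a BGP all of whose triples are ground. -/
def GroundBGP (P : BGP) : Prop := ∀ t ∈ P, tpVars t = ∅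

def applyTerm (μ : Mapping) : Term → Term
  | .c a => .c a
  | .v x =>
    match μ x with
    | some a => .c a
    | none => .v x

def applyTP (μ : Mapping) (t : TP) : TP :=
  (applyTerm μ t.1, applyTerm μ t.2.1, applyTerm μ t.2.2)

def applyBGP (μ : Mapping) (P : BGP) : BGP := applyTP μ '' P

/-- Domain of a mapping -/
def mdom (μ : Mapping) : Set Var := {x | μ x ≠ none}

/-- Evaluation of a BGP over a graph: ⟦P⟧_G = {μ | dom(μ) = var(P), μP ⊆ G}. -/
def bgpEval (P G : BGP) : Set Mapping := {μ | mdom μ = bgpVars P ∧ applyBGP μ P ⊆ G}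

/-- A completeness statement Compl(P_C). -/
structure CS where
  pat : BGP

/-- The CONSTRUCT query associated to a completeness statement. -/
def constructQ (C : CS) (G : BGP) : BGP := ⋃ μ ∈ bgpEval C.pat G, applyBGP μ C.pat

/-- Transfer operator T_𝒞. -/
def transfer (𝒞 : Set CS) (G : BGP) : BGP := ⋃ C ∈ 𝒞, constructQ C G

/-- (G, G') is a valid extension pair wrt 𝒞. -/
def Valid (𝒞 : Set CS) (G G' : BGP) : Prop :=
  G ⊆ G' ∧ GroundBGP G' ∧ transfer 𝒞 G' ⊆ G

/-- 𝒞, G ⊨ Compl(P). -/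
def Entails (𝒞 : Set CS) (G : BGP) (P : BGP) : Prop :=
  ∀ G', Valid 𝒞 G G' → bgpEval P G' = bgpEval P G

def emptyMap : Mapping := fun _ => none

/-- Union of two mappings (left-biased; used on mappings with disjoint domains). -/
def munion (μ ν : Mapping) : Mapping := fun x => (μ x).orElse (fun _ => ν x)

/-- Partially mapped BGP -/
abbrev PMBGP := BGP × Mapping

/-- Evaluation of a partially mapped BGP: ⟦(P, ν)⟧_G = {ν ∪ ρ | ρ ∈ ⟦P⟧_G}. -/
def evalPM (pm : PMBGP) (G : BGP) : Set Mapping :=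
  {σ | ∃ ρ ∈ bgpEval pm.1 G, σ = munion pm.2 ρ}

def evalPMSet (S : Set PMBGP) (G : BGP) : Set Mapping := ⋃ pm ∈ S, evalPM pm G

/-- S ≡_{𝒞,G} S' : equal evaluations over every valid extension pair. -/
def EquivCG (𝒞 : Set CS) (G : BGP) (S S' : Set PMBGP) : Prop :=
  ∀ G', Valid 𝒞 G G' → evalPMSet S G' = evalPMSet S' G'

/-- The freeze mapping, sending each variable to a (fresh) constant. -/
def freezeMap (frz : Var → Const) : Mapping := fun x => some (frz x)

/-- frz is a genuine freeze mapping: injective and its values are fresh. -/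
def Fresh (frz : Var → Const) (𝒞 : Set CS) (G P : BGP) : Prop :=
  Function.Injective frz ∧
    ∀ x, frz x ∉ bgpConsts G ∪ bgpConsts P ∪ ⋃ C ∈ 𝒞, bgpConsts C.pat

/-- Crucial part: cruc(P, 𝒞, G) = P ∩ id̃⁻¹(T_𝒞(P̃ ∪ G)). -/
def cruc (P : BGP) (𝒞 : Set CS) (G : BGP) (frz : Var → Const) : BGP :=
  {t | t ∈ P ∧ applyTP (freezeMap frz) t ∈ transfer 𝒞 (applyBGP (freezeMap frz) P ∪ G)}

/-- Equivalent partial grounding operator. -/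
def epg (pm : PMBGP) (𝒞 : Set CS) (G : BGP) (frz : Var → Const) : Set PMBGP :=
  {q | ∃ μ ∈ bgpEval (cruc pm.1 𝒞 G frz) G, q = (applyBGP μ pm.1, munion pm.2 μ)}

/-- A partially mapped BGP is saturated wrt 𝒞 and G. -/
def Saturated (pm : PMBGP) (𝒞 : Set CS) (G : BGP) (frz : Var → Const) : Prop :=
  epg pm 𝒞 G frz = {pm}

/-- Partially mapped BGPs reachable from (P, ∅) by the saturation algorithm's epg steps. -/
inductive Reach (𝒞 : Set CS) (G : BGP) (frz : Var → Const) (P : BGP) : PMBGP → Prop where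
  | init : Reach 𝒞 G frz P (P, emptyMap)
  | step {pm pm' : PMBGP} : Reach 𝒞 G frz P pm → epg pm 𝒞 G frz ≠ {pm} →
      pm' ∈ epg pm 𝒞 G frz → Reach 𝒞 G frz P pm'

/-- The set Ω of mappings returned by the saturation algorithm sat(P, 𝒞, G). -/
def satSet (𝒞 : Set CS) (G : BGP) (frz : Var → Const) (P : BGP) : Set Mapping :=
  {ν | ∃ P', Reach 𝒞 G frz P (P', ν) ∧ Saturated (P', ν) 𝒞 G frz}

/-!
Let `μ ∈ ⟦P⟧_{G'}` for a valid extension `G ⊆ G'` with `T_𝒞(G') ⊆ G`. The map on constants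
sending `frz x ↦ μ x` and fixing every other constant is, by freshness, a homomorphism from
`P̃ ∪ G` to `G'` that fixes the constants of every completeness statement, so it carries
`T_𝒞(P̃ ∪ G)` into `T_𝒞(G')`. Since `cruc P 𝒞 G = P`, each frozen triple `t̃` lies in
`T_𝒞(P̃ ∪ G)`, hence its image `μ t` lies in `T_𝒞(G') ⊆ G`.
-/

def Term.mapConst (h : Const → Const) : Term → Term
  | .c a => .c (h a)
  | .v x => .v x

def mapConstTP (h : Const → Const) (t : TP) : TP :=
  (t.1.mapConst h, t.2.1.mapConst h, t.2.2.mapConst h)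

section Homomorphism

variable {h : Const → Const} {ν ν' : Mapping}

lemma Term.mapConst_applyTerm {s : Term} (hc : ∀ a ∈ termConsts s, h a = a) :
    (applyTerm ν s).mapConst h = applyTerm (fun x => (ν x).map h) s := by
  cases s with
  | c a => simp [applyTerm, Term.mapConst, hc a (by simp [termConsts])]
  | v x => cases hx : ν x <;> simp [applyTerm, Term.mapConst, hx]

lemma applyTerm_congr {s : Term} (hν : ∀ x ∈ termVars s, ν x = ν' x) :
    applyTerm ν s = applyTerm ν' s := by
  cases s with
  | c a => rfl
  | v x => simp [applyTerm, hν x (by simp [termVars])]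

lemma mapConstTP_applyTP {t : TP} (hc : ∀ a ∈ tpConsts t, h a = a) :
    mapConstTP h (applyTP ν t) = applyTP (fun x => (ν x).map h) t := by
  simp only [tpConsts, Set.mem_union] at hc
  simp only [mapConstTP, applyTP]
  rw [Term.mapConst_applyTerm (fun a ha => hc a (.inl (.inl ha))),
    Term.mapConst_applyTerm (fun a ha => hc a (.inl (.inr ha))),
    Term.mapConst_applyTerm (fun a ha => hc a (.inr ha))]

lemma applyTP_congr {t : TP} (hν : ∀ x ∈ tpVars t, ν x = ν' x) :
    applyTP ν t = applyTP ν' t := by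
  simp only [tpVars, Set.mem_union] at hν
  simp only [applyTP]
  rw [applyTerm_congr (fun x hx => hν x (.inl (.inl hx))),
    applyTerm_congr (fun x hx => hν x (.inl (.inr hx))),
    applyTerm_congr (fun x hx => hν x (.inr hx))]

lemma Term.mapConst_eq_self {s : Term} (hc : ∀ a ∈ termConsts s, h a = a) :
    s.mapConst h = s := by
  cases s with
  | c a => simp [Term.mapConst, hc a (by simp [termConsts])]
  | v x => rfl

lemma mapConstTP_eq_self {t : TP} (hc : ∀ a ∈ tpConsts t, h a = a) : mapConstTP h t = t := by
  simp only [tpConsts, Set.mem_union] at hc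
  simp only [mapConstTP]
  rw [Term.mapConst_eq_self (fun a ha => hc a (.inl (.inl ha))),
    Term.mapConst_eq_self (fun a ha => hc a (.inl (.inr ha))),
    Term.mapConst_eq_self (fun a ha => hc a (.inr ha))]

lemma mdom_map (h : Const → Const) (ν : Mapping) : mdom (fun x => (ν x).map h) = mdom ν := by
  ext x
  simp [mdom]

lemma map_mem_bgpEval {Q H H' : BGP} (hν : ν ∈ bgpEval Q H) (hc : ∀ a ∈ bgpConsts Q, h a = a)
    (hH : Set.MapsTo (mapConstTP h) H H') : (fun x => (ν x).map h) ∈ bgpEval Q H' := by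
  refine ⟨(mdom_map h ν).trans hν.1, ?_⟩
  rintro _ ⟨t, ht, rfl⟩
  rw [← mapConstTP_applyTP fun a ha => hc a (Set.mem_biUnion ht ha)]
  exact hH (hν.2 ⟨t, ht, rfl⟩)

lemma mapsTo_transfer {𝒞 : Set CS} {H H' : BGP}
    (hc : ∀ C ∈ 𝒞, ∀ a ∈ bgpConsts C.pat, h a = a) (hH : Set.MapsTo (mapConstTP h) H H') :
    Set.MapsTo (mapConstTP h) (transfer 𝒞 H) (transfer 𝒞 H') := by
  intro s hs
  simp only [transfer, constructQ, applyBGP, Set.mem_iUnion, Set.mem_image, exists_prop]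
    at hs ⊢
  obtain ⟨C, hC, ν, hν, t, ht, rfl⟩ := hs
  refine ⟨C, hC, _, map_mem_bgpEval hν (hc C hC) hH, t, ht, ?_⟩
  exact (mapConstTP_applyTP fun a ha => hc C hC a (Set.mem_biUnion ht ha)).symm

end Homomorphism

lemma bgpEval_mono {P H H' : BGP} (hH : H ⊆ H') : bgpEval P H ⊆ bgpEval P H' :=
  fun _ hμ => ⟨hμ.1, hμ.2.trans hH⟩

noncomputable def thaw (frz : Var → Const) (μ : Mapping) : Const → Const :=
  Function.extend frz (fun x => (μ x).getD (frz x)) id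

section Thaw

variable {frz : Var → Const} {μ : Mapping}

lemma thaw_of_notMem_range {a : Const} (ha : a ∉ Set.range frz) : thaw frz μ a = a :=
  Function.extend_apply' _ _ _ ha

lemma mapConstTP_thaw_applyTP_freezeMap (hinj : Function.Injective frz) {t : TP}
    (hc : ∀ a ∈ tpConsts t, a ∉ Set.range frz) (hv : tpVars t ⊆ mdom μ) :
    mapConstTP (thaw frz μ) (applyTP (freezeMap frz) t) = applyTP μ t := by
  rw [mapConstTP_applyTP fun a ha => thaw_of_notMem_range (hc a ha)]
  refine applyTP_congr fun x hx => ?_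
  simp only [freezeMap, Option.map_some, thaw, hinj.extend_apply]
  exact Option.getD_of_ne_none (hv hx) _

variable {𝒞 : Set CS} {G P : BGP}

lemma Fresh.notMem_range_of_mem_graph (hfresh : Fresh frz 𝒞 G P) {a : Const}
    (ha : a ∈ bgpConsts G) : a ∉ Set.range frz := by
  rintro ⟨x, rfl⟩
  exact hfresh.2 x (.inl (.inl ha))

lemma Fresh.notMem_range_of_mem_pattern (hfresh : Fresh frz 𝒞 G P) {a : Const}
    (ha : a ∈ bgpConsts P) : a ∉ Set.range frz := by
  rintro ⟨x, rfl⟩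
  exact hfresh.2 x (.inl (.inr ha))

lemma Fresh.notMem_range_of_mem_statement (hfresh : Fresh frz 𝒞 G P) {C : CS} (hC : C ∈ 𝒞)
    {a : Const} (ha : a ∈ bgpConsts C.pat) : a ∉ Set.range frz := by
  rintro ⟨x, rfl⟩
  exact hfresh.2 x (.inr (Set.mem_biUnion hC ha))

lemma Fresh.mapConstTP_thaw_applyTP_freezeMap (hfresh : Fresh frz 𝒞 G P) {t : TP} (ht : t ∈ P)
    (hμ : mdom μ = bgpVars P) :
    mapConstTP (thaw frz μ) (applyTP (freezeMap frz) t) = applyTP μ t :=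
  _root_.mapConstTP_thaw_applyTP_freezeMap hfresh.1
    (fun _ ha => hfresh.notMem_range_of_mem_pattern (Set.mem_biUnion ht ha))
    (hμ ▸ Set.subset_biUnion_of_mem ht)

lemma Fresh.mapsTo_thaw (hfresh : Fresh frz 𝒞 G P) {G' : BGP} (hμ : μ ∈ bgpEval P G')
    (hG : G ⊆ G') :
    Set.MapsTo (mapConstTP (thaw frz μ)) (applyBGP (freezeMap frz) P ∪ G) G' := by
  rintro _ (⟨t, ht, rfl⟩ | hs)
  · rw [hfresh.mapConstTP_thaw_applyTP_freezeMap ht hμ.1]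
    exact hμ.2 ⟨t, ht, rfl⟩
  · rw [mapConstTP_eq_self fun a ha =>
      thaw_of_notMem_range (hfresh.notMem_range_of_mem_graph (Set.mem_biUnion hs ha))]
    exact hG hs

end Thaw

theorem stmt13_general (𝒞 : Set CS) (G : BGP) (frz : Var → Const) (P : BGP)
    (hfresh : Fresh frz 𝒞 G P)
    (hcruc : cruc P 𝒞 G frz = P) :
    Entails 𝒞 G P := by
  rintro G' ⟨hGG', -, htrans⟩
  refine subset_antisymm (fun μ hμ => ⟨hμ.1, ?_⟩) (bgpEval_mono hGG')
  rintro _ ⟨t, ht, rfl⟩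
  have hfrozen : applyTP (freezeMap frz) t ∈ transfer 𝒞 (applyBGP (freezeMap frz) P ∪ G) := by
    rw [← hcruc] at ht
    exact ht.2
  have hthawed := mapsTo_transfer
    (fun C hC _ ha => thaw_of_notMem_range (hfresh.notMem_range_of_mem_statement hC ha))
    (hfresh.mapsTo_thaw hμ hGG') hfrozen
  rw [hfresh.mapConstTP_thaw_applyTP_freezeMap ht hμ.1] at hthawed
  exact htrans hthawed

/-- If the crucial part equals the whole BGP, then 𝒞, G ⊨ Compl(P). -/
theorem stmt13 (𝒞 : Set CS) (G : BGP) (frz : Var → Const) (P : BGP)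
    (hg : GroundBGP G) (hfresh : Fresh frz 𝒞 G P)
    (hcruc : cruc P 𝒞 G frz = P) :
    Entails 𝒞 G P :=
  stmt13_general 𝒞 G frz P hfresh hcruc
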